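/- arXiv:1901.01402 — 4 statements merged into one kernel-verified Lean document; each statement's English description precedes it below -/
import Mathlib

section
/- Let (θ(t), r(t)) be a differentiable curve with r(t) > 0 for all t that solves the blown-up system θ' = (r/(sin²θ+1))·(1 + sinθ − 4sin²θ − sin³θ + sin⁴θ), r' = (r²/(sin²θ+1))·cosθ·sinθ·(sinθ − sin²θ + 2). Then the curve (x(t), y(t)) := (r(t)·cos θ(t), r(t)²·sin θ(t)) solves the system x' = y, y' = x³ + x y. -/
/-- The weighted polar blow-up map `φ(θ,r) = (r cos θ, r² sin θ)` sends solutions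
of the blown-up system (2.4) with `r > 0` to solutions of the original system
`x' = y, y' = x³ + xy` (2.1). -/
theorem stmt_1 (θ r : ℝ → ℝ) (hr : ∀ t, 0 < r t)
    (hθ : ∀ t, HasDerivAt θ
      ((r t / ((Real.sin (θ t)) ^ 2 + 1)) *
        (1 + Real.sin (θ t) - 4 * (Real.sin (θ t)) ^ 2
          - (Real.sin (θ t)) ^ 3 + (Real.sin (θ t)) ^ 4)) t)
    (hr' : ∀ t, HasDerivAt r
      (((r t) ^ 2 / ((Real.sin (θ t)) ^ 2 + 1)) *
        (Real.cos (θ t) * Real.sin (θ t) *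
          (Real.sin (θ t) - (Real.sin (θ t)) ^ 2 + 2))) t) :
    ∀ t, HasDerivAt (fun s => r s * Real.cos (θ s)) ((r t) ^ 2 * Real.sin (θ t)) t ∧
      HasDerivAt (fun s => (r s) ^ 2 * Real.sin (θ s))
        ((r t * Real.cos (θ t)) ^ 3 +
          (r t * Real.cos (θ t)) * ((r t) ^ 2 * Real.sin (θ t))) t := by
  intro t
  have hs : Real.sin (θ t) ^ 2 + Real.cos (θ t) ^ 2 = 1 := Real.sin_sq_add_cos_sq _
  have hd : Real.sin (θ t) ^ 2 + 1 ≠ 0 := by positivity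
  constructor
  · have h := (hr' t).fun_mul ((hθ t).cos)
    refine h.congr_deriv (Eq.symm ?_)
    field_simp
    linear_combination (-(r t)^2 * Real.sin (θ t) * (Real.sin (θ t) - Real.sin (θ t)^2 + 2)) * hs
  · have h := ((hr' t).fun_pow 2).fun_mul ((hθ t).sin)
    refine h.congr_deriv (Eq.symm ?_)
    field_simp
    linear_combination ((r t)^3 * Real.cos (θ t) * (Real.sin (θ t)^2 + 1)) * hs
end

section
/- The quartic polynomial s⁴ − s³ − 4s² + s + 1 factors as (s² + s − 1)(s² − 2s − 1), and its roots lying in the interval [−1,1] are exactly s = (√5 − 1)/2 and s = 1 − √2. Consequently, for θ ∈ [0, 2π), one has 1 + sinθ − 4sin²θ − sin³θ + sin⁴θ = 0 if and only if sinθ = (√5 − 1)/2 or sinθ = 1 − √2; hence the desingularized blown-up vector field (θ', r') = (F(θ), r·G(θ)) has exactly four equilibrium points on the circle {r = 0} with θ ∈ [0, 2π). -/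
/-- The quartic `s⁴ − s³ − 4s² + s + 1` factors as `(s² + s − 1)(s² − 2s − 1)`;
its roots in `[−1,1]` are exactly `(√5 − 1)/2` and `1 − √2`; hence for
`θ ∈ [0, 2π)` the function `1 + sinθ − 4sin²θ − sin³θ + sin⁴θ` vanishes iff
`sin θ` equals one of these two values, and the desingularized blown-up vector
field has exactly four equilibria on the circle `{r = 0}` with `θ ∈ [0, 2π)`. -/
theorem stmt_2 :
    (∀ s : ℝ, s ^ 4 - s ^ 3 - 4 * s ^ 2 + s + 1
        = (s ^ 2 + s - 1) * (s ^ 2 - 2 * s - 1)) ∧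
    (∀ s ∈ Set.Icc (-1 : ℝ) 1,
      (s ^ 4 - s ^ 3 - 4 * s ^ 2 + s + 1 = 0 ↔
        s = (Real.sqrt 5 - 1) / 2 ∨ s = 1 - Real.sqrt 2)) ∧
    (∀ θ ∈ Set.Ico (0 : ℝ) (2 * Real.pi),
      (1 + Real.sin θ - 4 * (Real.sin θ) ^ 2 - (Real.sin θ) ^ 3
          + (Real.sin θ) ^ 4 = 0 ↔
        Real.sin θ = (Real.sqrt 5 - 1) / 2 ∨ Real.sin θ = 1 - Real.sqrt 2)) ∧
    Set.ncard {θ : ℝ | θ ∈ Set.Ico (0 : ℝ) (2 * Real.pi) ∧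
      (1 + Real.sin θ - 4 * (Real.sin θ) ^ 2 - (Real.sin θ) ^ 3
          + (Real.sin θ) ^ 4) / ((Real.sin θ) ^ 2 + 1) = 0} = 4 := by
  have h5 : Real.sqrt 5 ^ 2 = 5 := Real.sq_sqrt (by norm_num)
  have h2 : Real.sqrt 2 ^ 2 = 2 := Real.sq_sqrt (by norm_num)
  have h5nn : (0:ℝ) ≤ Real.sqrt 5 := Real.sqrt_nonneg 5
  have h2nn : (0:ℝ) ≤ Real.sqrt 2 := Real.sqrt_nonneg 2
  have h5gt : (1:ℝ) < Real.sqrt 5 := by nlinarith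
  have h5lt : Real.sqrt 5 < 3 := by nlinarith
  have h2gt : (1:ℝ) < Real.sqrt 2 := by nlinarith
  have h2lt : Real.sqrt 2 < 2 := by nlinarith
  set a : ℝ := (Real.sqrt 5 - 1) / 2 with ha_def
  set b : ℝ := 1 - Real.sqrt 2 with hb_def
  have ha0 : 0 < a := by rw [ha_def]; linarith
  have ha1 : a < 1 := by rw [ha_def]; linarith
  have hb0 : b < 0 := by rw [hb_def]; linarith
  have hb1 : -1 < b := by rw [hb_def]; linarith
  have hfac : ∀ s : ℝ, s ^ 4 - s ^ 3 - 4 * s ^ 2 + s + 1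
      = (s ^ 2 + s - 1) * (s ^ 2 - 2 * s - 1) := by intro s; ring
  have hicc : ∀ s ∈ Set.Icc (-1 : ℝ) 1,
      (s ^ 4 - s ^ 3 - 4 * s ^ 2 + s + 1 = 0 ↔ s = a ∨ s = b) := by
    rintro s ⟨hs1, hs2⟩
    rw [hfac]
    constructor
    · intro h
      rcases mul_eq_zero.1 h with h' | h'
      · left
        have hzz : (s - a) * (s + (Real.sqrt 5 + 1) / 2) = 0 := by
          rw [ha_def]; linear_combination h' - (1/4) * h5
        rcases mul_eq_zero.1 hzz with h'' | h''
        · linarith [sub_eq_zero.1 h'']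
        · exfalso; nlinarith
      · right
        have hzz : (s - b) * (s - (1 + Real.sqrt 2)) = 0 := by
          rw [hb_def]; linear_combination h' - h2
        rcases mul_eq_zero.1 hzz with h'' | h''
        · linarith [sub_eq_zero.1 h'']
        · exfalso; nlinarith
    · rintro (rfl | rfl)
      · have : a ^ 2 + a - 1 = 0 := by rw [ha_def]; linear_combination (1/4) * h5
        rw [this, zero_mul]
      · have : b ^ 2 - 2 * b - 1 = 0 := by rw [hb_def]; linear_combination h2
        rw [this, mul_zero]
  have hsin : ∀ θ : ℝ,
      (1 + Real.sin θ - 4 * (Real.sin θ) ^ 2 - (Real.sin θ) ^ 3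
          + (Real.sin θ) ^ 4 = 0 ↔ Real.sin θ = a ∨ Real.sin θ = b) := by
    intro θ
    have hmem : Real.sin θ ∈ Set.Icc (-1 : ℝ) 1 :=
      ⟨Real.neg_one_le_sin θ, Real.sin_le_one θ⟩
    have := hicc _ hmem
    constructor
    · intro h; exact this.1 (by linarith)
    · intro h; have := this.2 h; linarith
  refine ⟨hfac, hicc, fun θ _ => hsin θ, ?_⟩
  -- counting
  have hpi : 0 < Real.pi := Real.pi_pos
  set α : ℝ := Real.arcsin a with hα_def
  set β : ℝ := Real.arcsin b with hβ_def
  have hα0 : 0 < α := Real.arcsin_pos.2 ha0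
  have hα2 : α < Real.pi / 2 := Real.arcsin_lt_pi_div_two.2 ha1
  have hβ0 : β < 0 := by
    by_contra h
    push_neg at h
    have h1 : Real.sin β ≥ 0 :=
      Real.sin_nonneg_of_nonneg_of_le_pi h (by linarith [Real.arcsin_le_pi_div_two b])
    rw [hβ_def, Real.sin_arcsin (by linarith) (by linarith)] at h1
    linarith
  have hβ2 : -(Real.pi / 2) < β := Real.neg_pi_div_two_lt_arcsin.2 hb1
  have hsinα : Real.sin α = a := Real.sin_arcsin (by linarith) (by linarith)
  have hsinβ : Real.sin β = b := Real.sin_arcsin (by linarith) (by linarith)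
  have hset : {θ : ℝ | θ ∈ Set.Ico (0 : ℝ) (2 * Real.pi) ∧
      (1 + Real.sin θ - 4 * (Real.sin θ) ^ 2 - (Real.sin θ) ^ 3
          + (Real.sin θ) ^ 4) / ((Real.sin θ) ^ 2 + 1) = 0}
      = {α, Real.pi - α, Real.pi - β, 2 * Real.pi + β} := by
    ext θ
    have hden : (Real.sin θ) ^ 2 + 1 ≠ 0 := by positivity
    simp only [Set.mem_setOf_eq, Set.mem_Ico, Set.mem_insert_iff, Set.mem_singleton_iff,
      div_eq_zero_iff, hden, or_false]
    constructor
    · rintro ⟨⟨hθ0, hθ2⟩, hnum⟩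
      have hsθ := (hsin θ).1 hnum
      -- locate θ
      have hkey : θ = Real.arcsin (Real.sin θ) ∨ θ = Real.pi - Real.arcsin (Real.sin θ)
          ∨ θ = 2 * Real.pi + Real.arcsin (Real.sin θ) := by
        rcases le_or_gt θ (Real.pi / 2) with h1 | h1
        · left
          rw [Real.arcsin_sin (by linarith) h1]
        · rcases le_or_gt θ (3 * Real.pi / 2) with h2 | h2
          · right; left
            have : Real.arcsin (Real.sin (Real.pi - θ)) = Real.pi - θ :=
              Real.arcsin_sin (by linarith) (by linarith)
            rw [Real.sin_pi_sub] at this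
            linarith
          · right; right
            have : Real.arcsin (Real.sin (θ - 2 * Real.pi)) = θ - 2 * Real.pi :=
              Real.arcsin_sin (by linarith) (by linarith)
            rw [Real.sin_sub_two_pi] at this
            linarith
      rcases hsθ with hc | hc <;> rw [hc] at hkey
      · rcases hkey with h | h | h
        · exact Or.inl h
        · exact Or.inr (Or.inl h)
        · exfalso; rw [← hα_def] at h; linarith
      · rcases hkey with h | h | h
        · exfalso; rw [← hβ_def] at h; linarith
        · exact Or.inr (Or.inr (Or.inl h))
        · exact Or.inr (Or.inr (Or.inr h))
    · intro h
      have hall : Real.sin θ = a ∨ Real.sin θ = b := by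
        rcases h with rfl | rfl | rfl | rfl
        · exact Or.inl hsinα
        · left; rw [Real.sin_pi_sub]; exact hsinα
        · right; rw [Real.sin_pi_sub]; exact hsinβ
        · right; rw [add_comm, Real.sin_add_two_pi]; exact hsinβ
      refine ⟨?_, (hsin θ).2 hall⟩
      rcases h with rfl | rfl | rfl | rfl
      · constructor <;> linarith
      · constructor <;> linarith
      · constructor <;> linarith
      · constructor <;> linarith
  rw [hset]
  have d1 : α < Real.pi - α := by linarith
  have d2 : Real.pi - α < Real.pi - β := by linarith
  have d3 : Real.pi - β < 2 * Real.pi + β := by linarith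
  have n1 : α ∉ ({Real.pi - α, Real.pi - β, 2 * Real.pi + β} : Set ℝ) := by
    simp only [Set.mem_insert_iff, Set.mem_singleton_iff]
    push_neg
    exact ⟨by linarith, by linarith, by linarith⟩
  have n2 : Real.pi - α ∉ ({Real.pi - β, 2 * Real.pi + β} : Set ℝ) := by
    simp only [Set.mem_insert_iff, Set.mem_singleton_iff]
    push_neg
    exact ⟨by linarith, by linarith⟩
  have n3 : Real.pi - β ∉ ({2 * Real.pi + β} : Set ℝ) := by
    simp only [Set.mem_singleton_iff]
    exact by linarith
  rw [Set.ncard_insert_of_notMem n1, Set.ncard_insert_of_notMem n2,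
    Set.ncard_insert_of_notMem n3, Set.ncard_singleton]
end

section
/- For every θ* ∈ [0, 2π) with sinθ* = (√5 − 1)/2 or sinθ* = 1 − √2, the Jacobian matrix of the desingularized blown-up vector field (θ, r) ↦ (F(θ), r·G(θ)) at the equilibrium (θ*, 0) is the diagonal matrix diag(F'(θ*), G(θ*)), and F'(θ*)·G(θ*) < 0; that is, each of the four equilibria on the circle {r = 0} is a hyperbolic saddle (two nonzero real eigenvalues of opposite sign). -/
private lemma hasDerivF_aux (θ : ℝ) :
    HasDerivAt (fun θ => (1 + Real.sin θ - 4 * (Real.sin θ) ^ 2 - (Real.sin θ) ^ 3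
        + (Real.sin θ) ^ 4) / ((Real.sin θ) ^ 2 + 1))
      ((Real.cos θ * (1 - 8 * Real.sin θ - 3 * (Real.sin θ)^2 + 4 * (Real.sin θ)^3) * ((Real.sin θ)^2 + 1)
        - (1 + Real.sin θ - 4 * (Real.sin θ) ^ 2 - (Real.sin θ) ^ 3 + (Real.sin θ) ^ 4)
          * (2 * Real.sin θ * Real.cos θ)) / ((Real.sin θ)^2 + 1)^2) θ := by
  have hs := Real.hasDerivAt_sin θ
  have hden : ((Real.sin θ)^2 + 1) ≠ 0 := by positivity
  have hnum : HasDerivAt (fun θ => 1 + Real.sin θ - 4 * (Real.sin θ) ^ 2 - (Real.sin θ) ^ 3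
        + (Real.sin θ) ^ 4)
      (Real.cos θ * (1 - 8 * Real.sin θ - 3 * (Real.sin θ)^2 + 4 * (Real.sin θ)^3)) θ := by
    have := (((hs.const_add 1).sub ((hs.pow 2).const_mul 4)).sub (hs.pow 3)).add (hs.pow 4)
    refine this.congr_deriv ?_
    norm_num
    ring
  have hd : HasDerivAt (fun θ => (Real.sin θ)^2 + 1) (2 * Real.sin θ * Real.cos θ) θ := by
    have := (hs.pow 2).add_const 1
    refine this.congr_deriv ?_
    norm_num
  exact hnum.div hd hden

private lemma hasDerivG_aux (θ : ℝ) : ∃ g',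
    HasDerivAt (fun θ => Real.cos θ * Real.sin θ * (Real.sin θ - (Real.sin θ) ^ 2 + 2)
        / ((Real.sin θ) ^ 2 + 1)) g' θ := by
  have hs := Real.hasDerivAt_sin θ
  have hc := Real.hasDerivAt_cos θ
  have hden : ((Real.sin θ)^2 + 1) ≠ 0 := by positivity
  exact ⟨_, (((hc.mul hs).mul ((hs.sub (hs.pow 2)).add_const 2)).div ((hs.pow 2).add_const 1) hden)⟩

private lemma sign_aux {s c : ℝ} (hc2 : c ^ 2 = 1 - s ^ 2)
    (h : (s ^ 2 + s - 1 = 0 ∧ 1/2 < s ∧ s < 1) ∨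
         (s ^ 2 - 2*s - 1 = 0 ∧ -1/2 < s ∧ s < 0)) :
    (c * (1 - 8 * s - 3 * s^2 + 4 * s^3) * (s^2 + 1)
        - (1 + s - 4 * s ^ 2 - s ^ 3 + s ^ 4) * (2 * s * c)) / (s^2 + 1)^2
      * (c * s * (s - s ^ 2 + 2) / (s ^ 2 + 1)) < 0 := by
  rw [div_mul_div_comm]
  apply div_neg_of_neg_of_pos
  · rcases h with ⟨hA, hs1, hs2⟩ | ⟨hB, hs1, hs2⟩
    · have hEq : (c * (1 - 8 * s - 3 * s^2 + 4 * s^3) * (s^2 + 1)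
          - (1 + s - 4 * s ^ 2 - s ^ 3 + s ^ 4) * (2 * s * c)) * (c * s * (s - s ^ 2 + 2))
          = (1 - s^2) * ((3*s - 6) * ((s^2 + 1) * (s * (2*s + 1)))) := by
        linear_combination
          (((1-8*s-3*s^2+4*s^3)*(s^2+1) - (1+s-4*s^2-s^3+s^4)*(2*s))*(s*(s-s^2+2))) * hc2
          + (1-s^2)*(-8*s+2*s^2+13*s^3-8*s^4+5*s^5-2*s^6) * hA
      rw [hEq]
      have e1 : 0 < 1 - s^2 := by nlinarith
      have hP : 0 < (1 - s^2) * ((s^2 + 1) * (s * (2*s + 1))) :=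
        mul_pos e1 (mul_pos (by positivity) (mul_pos (by linarith) (by linarith)))
      nlinarith [hP]
    · have hEq : (c * (1 - 8 * s - 3 * s^2 + 4 * s^3) * (s^2 + 1)
          - (1 + s - 4 * s ^ 2 - s ^ 3 + s ^ 4) * (2 * s * c)) * (c * s * (s - s ^ 2 + 2))
          = (1 - s^2) * (-(6 * (s^2 * ((1 - s)^2 * (s^2 + 1))))) := by
        linear_combination
          (((1-8*s-3*s^2+4*s^3)*(s^2+1) - (1+s-4*s^2-s^3+s^4)*(2*s))*(s*(s-s^2+2))) * hc2
          + (1-s^2)*(-2*s+17*s^2-5*s^3+s^4-s^5-2*s^6) * hB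
      rw [hEq]
      have e1 : 0 < 1 - s^2 := by nlinarith
      have hs0 : 0 < s^2 := by nlinarith
      have hP : 0 < (1 - s^2) * (6 * (s^2 * ((1 - s)^2 * (s^2 + 1)))) :=
        mul_pos e1 (mul_pos (by norm_num) (mul_pos hs0 (mul_pos (by nlinarith) (by positivity))))
      nlinarith [hP]
  · positivity

/-- At each of the four equilibria `(θ*, 0)` of the desingularized blown-up
system `(θ', r') = (F(θ), r·G(θ))` (i.e. those `θ*` with
`sin θ* = (√5 − 1)/2` or `sin θ* = 1 − √2`), the Jacobian is the diagonal map
`(u, v) ↦ (F'(θ*)·u, G(θ*)·v)` and `F'(θ*)·G(θ*) < 0`, so each equilibrium is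
a hyperbolic saddle. -/
theorem stmt_3 (F G : ℝ → ℝ)
    (hF : ∀ θ : ℝ, F θ =
      (1 + Real.sin θ - 4 * (Real.sin θ) ^ 2 - (Real.sin θ) ^ 3
        + (Real.sin θ) ^ 4) / ((Real.sin θ) ^ 2 + 1))
    (hG : ∀ θ : ℝ, G θ =
      Real.cos θ * Real.sin θ * (Real.sin θ - (Real.sin θ) ^ 2 + 2)
        / ((Real.sin θ) ^ 2 + 1)) :
    ∀ θs ∈ Set.Ico (0 : ℝ) (2 * Real.pi),
      (Real.sin θs = (Real.sqrt 5 - 1) / 2 ∨ Real.sin θs = 1 - Real.sqrt 2) →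
      ∃ L : ℝ × ℝ →L[ℝ] ℝ × ℝ,
        HasFDerivAt (fun p : ℝ × ℝ => (F p.1, p.2 * G p.1)) L (θs, 0) ∧
        (∀ v : ℝ × ℝ, L v = (deriv F θs * v.1, G θs * v.2)) ∧
        deriv F θs * G θs < 0 := by
  have hFe : F = fun θ => (1 + Real.sin θ - 4 * (Real.sin θ) ^ 2 - (Real.sin θ) ^ 3
        + (Real.sin θ) ^ 4) / ((Real.sin θ) ^ 2 + 1) := funext hF
  have hGe : G = fun θ => Real.cos θ * Real.sin θ * (Real.sin θ - (Real.sin θ) ^ 2 + 2)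
        / ((Real.sin θ) ^ 2 + 1) := funext hG
  subst hFe hGe
  intro θs _ hsin
  have hFd := hasDerivF_aux θs
  obtain ⟨g', hGd⟩ := hasDerivG_aux θs
  have h1 := hFd.hasFDerivAt.comp (θs, (0:ℝ)) (hasFDerivAt_fst (𝕜 := ℝ) (p := (θs, (0:ℝ))))
  have h2 := (hasFDerivAt_snd (𝕜 := ℝ) (p := (θs, (0:ℝ)))).mul
    (hGd.hasFDerivAt.comp (θs, (0:ℝ)) (hasFDerivAt_fst (𝕜 := ℝ) (p := (θs, (0:ℝ)))))
  refine ⟨_, HasFDerivAt.prodMk h1 h2, fun v => ?_, ?_⟩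
  · simp [hFd.deriv, mul_comm]
  · rw [hFd.deriv]
    have hc2 : (Real.cos θs) ^ 2 = 1 - (Real.sin θs) ^ 2 := by
      have := Real.sin_sq_add_cos_sq θs; linarith
    apply sign_aux hc2
    rcases hsin with h | h
    · left
      have h5 : Real.sqrt 5 ^ 2 = 5 := Real.sq_sqrt (by norm_num)
      have h5n := Real.sqrt_nonneg 5
      have hl : 2 < Real.sqrt 5 := by nlinarith
      have hu : Real.sqrt 5 < 3 := by nlinarith
      refine ⟨by rw [h]; linear_combination h5 / 4, by rw [h]; linarith, by rw [h]; linarith⟩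
    · right
      have h2q : Real.sqrt 2 ^ 2 = 2 := Real.sq_sqrt (by norm_num)
      have h2n := Real.sqrt_nonneg 2
      have hl : 1 < Real.sqrt 2 := by nlinarith
      have hu : Real.sqrt 2 < 3/2 := by nlinarith
      refine ⟨by rw [h]; linear_combination h2q, by rw [h]; linarith, by rw [h]; linarith⟩
end

section
/- Let H(x, y) = e^{−2y}·(y − x² + 1/2). Then the zero level set {(x,y) ∈ ℝ² : H(x,y) = 0} is exactly the parabola {(x,y) : y = x² − 1/2}. Moreover, the explicit curve γ_c(t) = (t/2, t²/4 − 1/2) is a solution of the system x' = x² − y, y' = x whose image is that parabola; along γ_c the x-coordinate increases from −∞ to +∞ (connecting the region x < 0 to the region x > 0). -/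
/-- The zero level set of `H(x, y) = e^{−2y}·(y − x² + 1/2)` is exactly the
parabola `{y = x² − 1/2}`; the curve `γ_c(t) = (t/2, t²/4 − 1/2)` solves
`x' = x² − y, y' = x`, its image is that parabola, and its `x`-coordinate
increases from `−∞` to `+∞` (it is strictly monotone and surjective). -/
theorem stmt_9 (H : ℝ → ℝ → ℝ)
    (hH : ∀ x y : ℝ, H x y = Real.exp (-2 * y) * (y - x ^ 2 + 1 / 2)) :
    ({p : ℝ × ℝ | H p.1 p.2 = 0} = {p : ℝ × ℝ | p.2 = p.1 ^ 2 - 1 / 2}) ∧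
    (∀ t : ℝ,
      HasDerivAt (fun s : ℝ => s / 2) ((t / 2) ^ 2 - (t ^ 2 / 4 - 1 / 2)) t ∧
      HasDerivAt (fun s : ℝ => s ^ 2 / 4 - 1 / 2) (t / 2) t) ∧
    (Set.range (fun t : ℝ => ((t / 2 : ℝ), (t ^ 2 / 4 - 1 / 2 : ℝ)))
      = {p : ℝ × ℝ | p.2 = p.1 ^ 2 - 1 / 2}) ∧
    StrictMono (fun t : ℝ => t / 2) ∧
    Function.Surjective (fun t : ℝ => t / 2) := by
  refine ⟨?_, ?_, ?_, ?_, ?_⟩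
  · ext p
    simp only [Set.mem_setOf_eq, hH, mul_eq_zero, Real.exp_ne_zero, false_or]
    constructor
    · intro h; linarith
    · intro h; linarith
  · intro t
    constructor
    · have h : HasDerivAt (fun s : ℝ => s / 2) (1 / 2) t := by
        simpa using (hasDerivAt_id t).div_const 2
      convert h using 1; ring
    · have h : HasDerivAt (fun s : ℝ => s ^ 2 / 4 - 1 / 2) (2 * t ^ 1 / 4) t := by
        exact (((hasDerivAt_pow 2 t).div_const 4).sub_const (1 / 2))
      convert h using 1; ring
  · ext p
    simp only [Set.mem_range, Set.mem_setOf_eq, Prod.mk.injEq, Prod.ext_iff]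
    constructor
    · rintro ⟨t, ht1, ht2⟩
      rw [← ht1, ← ht2]; ring
    · intro h
      exact ⟨2 * p.1, by ring, by rw [h]; ring⟩
  · intro a b hab; exact div_lt_div_of_pos_right hab (by norm_num)
  · intro y; exact ⟨2 * y, by ring⟩
end
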